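/- Let U be a finite set of pairwise distinct unit vectors in ℝ² with pos(U) = ℝ². Then |U_□| ∈ {0, 1, 2, 4}; in particular |U_□| ≠ 3. -/

import Mathlib

open RealInnerProductSpace

noncomputable section

abbrev V2 : Type := EuclideanSpace ℝ (Fin 2)

/-- The positive hull: all nonnegative linear combinations of elements of `M`. -/
def pos {E : Type*} [AddCommMonoid E] [Module ℝ E] (M : Set E) : Set E :=
  {x | ∃ (s : Finset E) (c : E → ℝ),
    (↑s : Set E) ⊆ M ∧ (∀ v, 0 ≤ c v) ∧ x = ∑ v ∈ s, c v • v}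

/-- The set `U_□` of vectors of `U` not belonging to any positively spanning triple. -/
def Usq (U : Set V2) : Set V2 :=
  {u ∈ U | ¬ ∃ v ∈ U, ∃ w ∈ U, pos {u, v, w} = Set.univ}

/-!
In the plane, a triple `{u, v, w}` positively spans iff its consecutive cross products
`cross u v`, `cross v w`, `cross w u` are all positive or all negative; so `u ∈ U_□` iff no
counterclockwise triple of `U` passes through `u`. Every `u ∈ U_□` has `-u ∈ U`: otherwise the
element of `U` farthest counterclockwise from `u` in the open half-plane to the left of `u` would
bound a closed half-plane containing all of `U`. If `u₁, u₂ ∈ U_□` with `cross u₁ u₂ > 0`, then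
`U` lies in the closed sector from `u₁` to `u₂` together with `-u₁` and `-u₂`. Hence
`U_□ ⊆ {±u₁, ±u₂}`, and each of `-u₁`, `-u₂` lies in `U_□` exactly when `U` misses the open
sector, so `|U_□| ∈ {2, 4}`. If there is no such pair, `U_□ ⊆ {u, -u}`.
-/

open Set

namespace V2

def cross (x y : V2) : ℝ := x 0 * y 1 - x 1 * y 0

@[simp]
lemma cross_self (x : V2) : cross x x = 0 := by
  simp only [cross]; ring

@[simp]
lemma cross_neg_left (x y : V2) : cross (-x) y = -cross x y := by
  simp only [cross, PiLp.neg_apply]; ring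

@[simp]
lemma cross_neg_right (x y : V2) : cross x (-y) = -cross x y := by
  simp only [cross, PiLp.neg_apply]; ring

lemma cross_anticomm (x y : V2) : cross y x = -cross x y := by
  simp only [cross]; ring

lemma cross_sum_smul (d : V2) (s : Finset V2) (c : V2 → ℝ) :
    cross d (∑ v ∈ s, c v • v) = ∑ v ∈ s, c v * cross d v := by
  simp only [cross, WithLp.ofLp_sum, Finset.sum_apply, PiLp.smul_apply, smul_eq_mul,
    Finset.mul_sum, ← Finset.sum_sub_distrib]
  exact Finset.sum_congr rfl fun _ _ => by ring

lemma inner_eq (x y : V2) : ⟪x, y⟫ = x 0 * y 0 + x 1 * y 1 := by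
  simp [PiLp.inner_apply, Fin.sum_univ_two, mul_comm]

lemma norm_sq_eq (x : V2) : ‖x‖ ^ 2 = x 0 ^ 2 + x 1 ^ 2 := by
  simp [EuclideanSpace.real_norm_sq_eq, Fin.sum_univ_two]

lemma inner_sq_add_cross_sq (x y : V2) : ⟪x, y⟫ ^ 2 + cross x y ^ 2 = ‖x‖ ^ 2 * ‖y‖ ^ 2 := by
  rw [inner_eq, norm_sq_eq, norm_sq_eq, cross]; ring

lemma inner_mul_cross_sub (a x y : V2) :
    ⟪a, x⟫ * cross a y - cross a x * ⟪a, y⟫ = ‖a‖ ^ 2 * cross x y := by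
  rw [inner_eq, inner_eq, norm_sq_eq]; simp only [cross]; ring

lemma cross_smul_eq (u v x : V2) : cross u v • x = cross x v • u + cross u x • v := by
  ext i; fin_cases i <;> simp [cross] <;> ring

lemma cross_cyclic_sum (u v w x : V2) :
    cross v w * cross u x + cross w u * cross v x + cross u v * cross w x = 0 := by
  simp only [cross]; ring

lemma eq_or_eq_neg_of_cross_eq_zero {u v : V2} (hu : ‖u‖ = 1) (hv : ‖v‖ = 1)
    (h : cross u v = 0) : v = u ∨ v = -u := by
  have hsq : ⟪u, v⟫ ^ 2 = 1 := by simpa [h, hu, hv] using inner_sq_add_cross_sq u v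
  rcases sq_eq_one_iff.1 hsq with h1 | h1
  · exact .inl ((inner_eq_one_iff_of_norm_eq_one hu hv).1 h1).symm
  · exact .inr (neg_eq_iff_eq_neg.1 ((inner_eq_neg_one_iff_of_norm_eq_one hu hv).1 h1).symm)

lemma smul_add_smul_mem_pos {E : Type*} [AddCommMonoid E] [Module ℝ E] {M : Set E} {u v : E}
    (hu : u ∈ M) (hv : v ∈ M) {a b : ℝ} (ha : 0 ≤ a) (hb : 0 ≤ b) : a • u + b • v ∈ pos M := by
  classical
  refine ⟨{u, v}, fun z => (if z = u then a else 0) + (if z = v then b else 0), ?_, ?_, ?_⟩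
  · simp [insert_subset_iff, hu, hv]
  · intro z
    dsimp only
    split_ifs <;> linarith
  · simp [add_smul, Finset.sum_add_distrib, ite_smul]

lemma cross_nonpos_of_mem_pos {M : Set V2} {d : V2} (h : ∀ x ∈ M, cross d x ≤ 0) {y : V2}
    (hy : y ∈ pos M) : cross d y ≤ 0 := by
  obtain ⟨s, c, hs, hc, rfl⟩ := hy
  rw [cross_sum_smul]
  exact Finset.sum_nonpos fun v hv => mul_nonpos_of_nonneg_of_nonpos (hc v) (h v (hs hv))

lemma exists_mem_cross_pos {M : Set V2} (hM : pos M = univ) {d : V2} (hd : d ≠ 0) :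
    ∃ x ∈ M, 0 < cross d x := by
  by_contra! h
  have hrot : cross d !₂[-d 1, d 0] = ‖d‖ ^ 2 := by
    simp [cross, norm_sq_eq]; ring
  have := cross_nonpos_of_mem_pos h (hM ▸ mem_univ !₂[-d 1, d 0])
  rw [hrot] at this
  exact hd (norm_eq_zero.1 (by nlinarith [norm_nonneg d]))

lemma mem_pos_of_cross_nonneg {M : Set V2} {u v x : V2} (hu : u ∈ M) (hv : v ∈ M)
    (huv : 0 < cross u v) (hux : 0 ≤ cross u x) (hxv : 0 ≤ cross x v) : x ∈ pos M := by
  have hx : x = (cross x v / cross u v) • u + (cross u x / cross u v) • v := by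
    rw [div_eq_inv_mul, div_eq_inv_mul, mul_smul, mul_smul, ← smul_add, ← cross_smul_eq,
      inv_smul_smul₀ huv.ne']
  rw [hx]
  exact smul_add_smul_mem_pos hu hv (div_nonneg hxv huv.le) (div_nonneg hux huv.le)

def IsCCW (u v w : V2) : Prop := 0 < cross u v ∧ 0 < cross v w ∧ 0 < cross w u

lemma IsCCW.pos_eq_univ {u v w : V2} (h : IsCCW u v w) : pos {u, v, w} = univ := by
  obtain ⟨huv, hvw, hwu⟩ := h
  refine eq_univ_of_forall fun x => ?_
  have hsum := cross_cyclic_sum u v w x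
  have hxu := cross_anticomm x u
  have hxv := cross_anticomm x v
  have hxw := cross_anticomm x w
  -- the coefficients of `cross_cyclic_sum` are positive, so `cross · x` cannot have the same
  -- strict sign at `u`, `v` and `w`: `x` lies in one of the three sectors they cut out
  have : (0 ≤ cross u x ∧ 0 ≤ cross x v) ∨ (0 ≤ cross v x ∧ 0 ≤ cross x w) ∨
      (0 ≤ cross w x ∧ 0 ≤ cross x u) := by
    by_contra h
    simp only [not_or, not_and_or, not_le] at h
    obtain ⟨h1 | h1, h2 | h2, h3 | h3⟩ := h <;>
      nlinarith [mul_pos hvw huv, mul_pos hwu hvw, mul_pos huv hwu]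
  rcases this with ⟨h1, h2⟩ | ⟨h1, h2⟩ | ⟨h1, h2⟩
  · exact mem_pos_of_cross_nonneg (by simp) (by simp) huv h1 h2
  · exact mem_pos_of_cross_nonneg (by simp) (by simp) hvw h1 h2
  · exact mem_pos_of_cross_nonneg (by simp) (by simp) hwu h1 h2

lemma cross_mul_cross_neg_of_pos_eq_univ {d y z : V2} (hd : d ≠ 0) (h : pos {d, y, z} = univ) :
    cross d y * cross d z < 0 := by
  obtain ⟨x, hx, hpos⟩ := exists_mem_cross_pos h hd
  obtain ⟨x', hx', hneg⟩ := exists_mem_cross_pos h (neg_ne_zero.2 hd)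
  simp only [mem_insert_iff, mem_singleton_iff] at hx hx'
  rcases hx with rfl | rfl | rfl <;> rcases hx' with rfl | rfl | rfl <;> simp at hpos hneg <;>
    nlinarith

lemma isCCW_or_isCCW_of_pos_eq_univ {u v w : V2} (hu : u ≠ 0) (hv : v ≠ 0)
    (h : pos {u, v, w} = univ) : IsCCW u v w ∨ IsCCW u w v := by
  have hu' := mul_neg_iff.1 (cross_mul_cross_neg_of_pos_eq_univ hu h)
  have hv' := mul_neg_iff.1 (cross_mul_cross_neg_of_pos_eq_univ hv (insert_comm u v {w} ▸ h))
  have := cross_anticomm u v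
  have := cross_anticomm u w
  have := cross_anticomm v w
  rcases hu' with ⟨h1, h2⟩ | ⟨h1, h2⟩
  · exact .inl ⟨h1, by rcases hv' with h | h <;> linarith [h.1, h.2], by linarith⟩
  · exact .inr ⟨h2, by rcases hv' with h | h <;> linarith [h.1, h.2], by linarith⟩

lemma not_isCCW_of_mem_Usq {U : Set V2} {u v w : V2} (hu : u ∈ Usq U) (hv : v ∈ U) (hw : w ∈ U) :
    ¬IsCCW u v w :=
  fun h => hu.2 ⟨v, hv, w, hw, h.pos_eq_univ⟩

lemma mem_Usq_of_forall_not_isCCW {U : Set V2} (h0 : (0 : V2) ∉ U) {u : V2} (hu : u ∈ U)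
    (h : ∀ v ∈ U, ∀ w ∈ U, ¬IsCCW u v w) : u ∈ Usq U := by
  refine ⟨hu, fun ⟨v, hv, w, hw, hspan⟩ => ?_⟩
  rcases isCCW_or_isCCW_of_pos_eq_univ (ne_of_mem_of_not_mem hu h0)
    (ne_of_mem_of_not_mem hv h0) hspan with hccw | hccw
  · exact h v hv w hw hccw
  · exact h w hw v hv hccw

lemma exists_mem_cross_eq_zero_inner_neg {U : Set V2} (hfin : U.Finite) (hpos : pos U = univ)
    (h0 : (0 : V2) ∉ U) {u : V2} (hu : u ∈ Usq U) : ∃ x ∈ U, cross u x = 0 ∧ ⟪u, x⟫ < 0 := by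
  by_contra! hray
  have hu0 : u ≠ 0 := ne_of_mem_of_not_mem hu.1 h0
  obtain ⟨a, haU, ha⟩ := exists_mem_cross_pos hpos hu0
  -- `⟪u, z⟫ / cross u z` is the cotangent of the angle from `u` to `z`, so `b` is the element of
  -- `U` farthest counterclockwise from `u` in the open half-plane to its left
  obtain ⟨b, ⟨hbU, hb⟩, hbmin⟩ := exists_min_image {z ∈ U | 0 < cross u z}
    (fun z => ⟪u, z⟫ / cross u z) (hfin.subset (sep_subset _ _)) ⟨a, haU, ha⟩
  obtain ⟨x, hxU, hx⟩ := exists_mem_cross_pos hpos (ne_of_mem_of_not_mem hbU h0)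
  rcases lt_or_ge (cross u x) 0 with hux | hux
  · exact not_isCCW_of_mem_Usq hu hbU hxU ⟨hb, hx, by linarith [cross_anticomm u x]⟩
  · have hkey : ⟪u, b⟫ * cross u x ≤ ⟪u, x⟫ * cross u b := by
      rcases hux.eq_or_lt with hux | hux
      · rw [← hux, mul_zero]
        exact mul_nonneg (hray x hxU hux.symm) hb.le
      · exact (div_le_div_iff₀ hb hux).1 (hbmin x ⟨hxU, hux⟩)
    have hnorm : 0 < ‖u‖ ^ 2 := by positivity
    nlinarith [inner_mul_cross_sub u b x]

lemma zero_notMem_of_forall_norm_eq_one {U : Set V2} (hunit : ∀ v ∈ U, ‖v‖ = 1) :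
    (0 : V2) ∉ U :=
  fun h => by simpa using hunit 0 h

lemma neg_mem_of_mem_Usq {U : Set V2} (hfin : U.Finite) (hunit : ∀ v ∈ U, ‖v‖ = 1)
    (hpos : pos U = univ) {u : V2} (hu : u ∈ Usq U) : -u ∈ U := by
  obtain ⟨x, hxU, hux, hinner⟩ := exists_mem_cross_eq_zero_inner_neg hfin hpos
    (zero_notMem_of_forall_norm_eq_one hunit) hu
  rcases eq_or_eq_neg_of_cross_eq_zero (hunit u hu.1) (hunit x hxU) hux with rfl | rfl
  · norm_num [hunit x hxU] at hinner
  · exact hxU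

lemma ncard_le_two_of_forall_cross_nonpos {S : Set V2} (hunit : ∀ v ∈ S, ‖v‖ = 1)
    (h : ∀ u ∈ S, ∀ v ∈ S, cross u v ≤ 0) : S.ncard ≤ 2 := by
  rcases S.eq_empty_or_nonempty with rfl | ⟨u, hu⟩
  · simp
  have hsub : S ⊆ {u, -u} := fun x hx =>
    eq_or_eq_neg_of_cross_eq_zero (hunit u hu) (hunit x hx)
      (le_antisymm (h u hu x hx) (by linarith [h x hx u hu, cross_anticomm u x]))
  calc S.ncard ≤ ({u, -u} : Set V2).ncard := ncard_le_ncard hsub (toFinite _)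
    _ ≤ 2 := (ncard_insert_le _ _).trans (by simp)

lemma ncard_insert_neg_insert_neg {u v : V2} (hu : u ≠ 0) (hv : v ≠ 0) (huv : cross u v ≠ 0) :
    ({u, -u, v, -v} : Set V2).ncard = 4 := by
  have hneg {x : V2} (hx : x ≠ 0) : x ≠ -x := fun h => hx <| by
    rwa [eq_neg_iff_add_eq_zero, ← two_smul ℝ, smul_eq_zero, or_iff_right two_ne_zero] at h
  have h₁ : v ≠ u := by rintro rfl; simp at huv
  have h₂ : u ≠ -v := by rintro rfl; simp at huv
  rw [ncard_insert_of_notMem, ncard_insert_of_notMem, ncard_pair (hneg hv)]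
  · simp [h₁.symm, h₂, neg_eq_iff_eq_neg]
  · simp [hneg hu, h₁.symm, h₂]

section Sector

variable {U : Set V2} {u₁ u₂ : V2} (hunit : ∀ v ∈ U, ‖v‖ = 1) (hneg : ∀ x ∈ Usq U, -x ∈ U)
  (h₁ : u₁ ∈ Usq U) (h₂ : u₂ ∈ Usq U) (h₁₂ : 0 < cross u₁ u₂)
include hunit hneg h₁ h₂ h₁₂

lemma mem_sector_or_eq_neg {x : V2} (hx : x ∈ U) :
    (0 ≤ cross u₁ x ∧ cross u₂ x ≤ 0) ∨ x = -u₁ ∨ x = -u₂ := by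
  have h₂₁ := cross_anticomm u₁ u₂
  have hx₁ := cross_anticomm u₁ x
  have hx₂ := cross_anticomm u₂ x
  rcases lt_trichotomy (cross u₁ x) 0 with hu₁x | hu₁x | hu₁x
  · have hu₂x : cross u₂ x = 0 := by
      refine le_antisymm (not_lt.1 fun hu₂x => ?_) (not_lt.1 fun hu₂x => ?_)
      · exact not_isCCW_of_mem_Usq h₂ hx h₁.1 ⟨hu₂x, by linarith, h₁₂⟩
      · exact not_isCCW_of_mem_Usq h₂ (hneg u₁ h₁) hx ⟨by simpa [h₂₁] using h₁₂,
          by simpa using hu₁x, by linarith⟩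
    rcases eq_or_eq_neg_of_cross_eq_zero (hunit u₂ h₂.1) (hunit x hx) hu₂x with rfl | rfl
    · linarith
    · exact .inr (.inr rfl)
  · rcases eq_or_eq_neg_of_cross_eq_zero (hunit u₁ h₁.1) (hunit x hx) hu₁x with rfl | rfl
    · exact .inl ⟨(cross_self x).ge, by linarith⟩
    · exact .inr (.inl rfl)
  · refine .inl ⟨hu₁x.le, not_lt.1 fun hu₂x => ?_⟩
    exact not_isCCW_of_mem_Usq h₁ hx (hneg u₂ h₂) ⟨hu₁x, by simpa [hx₂] using hu₂x,
      by simpa [h₂₁] using h₁₂⟩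

lemma Usq_subset_of_cross_pos : Usq U ⊆ {u₁, -u₁, u₂, -u₂} := by
  intro x hx
  simp only [mem_insert_iff, mem_singleton_iff]
  rcases mem_sector_or_eq_neg hunit hneg h₁ h₂ h₁₂ hx.1 with ⟨hx₁, -⟩ | rfl | rfl
  · rcases mem_sector_or_eq_neg hunit hneg h₁ h₂ h₁₂ (hneg x hx) with ⟨hx₁', -⟩ | h | h
    · rw [cross_neg_right] at hx₁'
      have := eq_or_eq_neg_of_cross_eq_zero (hunit u₁ h₁.1) (hunit x hx.1) (by linarith)
      tauto
    · exact .inl (neg_inj.1 h)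
    · exact .inr (.inr (.inl (neg_inj.1 h)))
  · tauto
  · tauto

lemma neg_mem_Usq_iff_left : -u₁ ∈ Usq U ↔ ¬∃ x ∈ U, 0 < cross u₁ x ∧ cross u₂ x < 0 := by
  constructor
  · rintro hn ⟨x, hx, hx₁, hx₂⟩
    exact not_isCCW_of_mem_Usq hn (hneg u₂ h₂) hx ⟨by simpa using h₁₂, by simpa using hx₂,
      by simpa [cross_anticomm x u₁] using hx₁⟩
  · refine fun hQ => mem_Usq_of_forall_not_isCCW (zero_notMem_of_forall_norm_eq_one hunit)
      (hneg u₁ h₁) fun v hv w hw ⟨hv₁, hvw, hw₁⟩ => ?_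
    rcases mem_sector_or_eq_neg hunit hneg h₁ h₂ h₁₂ hv with ⟨hs, -⟩ | rfl | rfl
    · simp only [cross_neg_left] at hv₁; linarith
    · simp at hv₁
    · exact hQ ⟨w, hw, by simpa [cross_anticomm w u₁] using hw₁, by simpa using hvw⟩

lemma neg_mem_Usq_iff_right : -u₂ ∈ Usq U ↔ ¬∃ x ∈ U, 0 < cross u₁ x ∧ cross u₂ x < 0 := by
  constructor
  · rintro hn ⟨x, hx, hx₁, hx₂⟩
    exact not_isCCW_of_mem_Usq hn hx (hneg u₁ h₁) ⟨by simpa using hx₂,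
      by simpa [cross_anticomm x u₁] using hx₁, by simpa using h₁₂⟩
  · refine fun hQ => mem_Usq_of_forall_not_isCCW (zero_notMem_of_forall_norm_eq_one hunit)
      (hneg u₂ h₂) fun v hv w hw ⟨hv₂, hvw, hw₂⟩ => ?_
    rcases mem_sector_or_eq_neg hunit hneg h₁ h₂ h₁₂ hw with ⟨-, hs⟩ | rfl | rfl
    · simp only [cross_neg_right] at hw₂; linarith [cross_anticomm u₂ w]
    · exact hQ ⟨v, hv, by simpa [cross_anticomm v u₁] using hvw, by simpa using hv₂⟩
    · simp at hw₂

lemma ncard_Usq_of_cross_pos : (Usq U).ncard = 2 ∨ (Usq U).ncard = 4 := by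
  have hsub := Usq_subset_of_cross_pos hunit hneg h₁ h₂ h₁₂
  have hiff := (neg_mem_Usq_iff_left hunit hneg h₁ h₂ h₁₂).trans
    (neg_mem_Usq_iff_right hunit hneg h₁ h₂ h₁₂).symm
  by_cases hn : -u₁ ∈ Usq U
  · rw [hsub.antisymm (by simp [insert_subset_iff, h₁, h₂, hn, hiff.1 hn])]
    have h0 := zero_notMem_of_forall_norm_eq_one hunit
    exact .inr (ncard_insert_neg_insert_neg (ne_of_mem_of_not_mem h₁.1 h0)
      (ne_of_mem_of_not_mem h₂.1 h0) h₁₂.ne')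
  · have hpair : Usq U = {u₁, u₂} := by
      refine subset_antisymm (fun x hx => ?_) (by simp [insert_subset_iff, h₁, h₂])
      rcases hsub hx with rfl | rfl | rfl | rfl
      · exact mem_insert _ _
      · exact absurd hx hn
      · exact mem_insert_of_mem _ rfl
      · exact absurd hx (hiff.not.1 hn)
    exact .inl (hpair ▸ ncard_pair (by rintro rfl; simp at h₁₂))

end Sector

end V2

theorem stmt5 (U : Set V2) (hfin : U.Finite) (hunit : ∀ v ∈ U, ‖v‖ = 1)
    (hpos : pos U = Set.univ) :
    (Usq U).ncard ∈ ({0, 1, 2, 4} : Set ℕ) := by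
  have hneg (x : V2) (hx : x ∈ Usq U) : -x ∈ U := V2.neg_mem_of_mem_Usq hfin hunit hpos hx
  by_cases h : ∃ u₁ ∈ Usq U, ∃ u₂ ∈ Usq U, 0 < u₁.cross u₂
  · obtain ⟨u₁, h₁, u₂, h₂, h₁₂⟩ := h
    rcases V2.ncard_Usq_of_cross_pos hunit hneg h₁ h₂ h₁₂ with h | h <;> simp [h]
  · push Not at h
    have := V2.ncard_le_two_of_forall_cross_nonpos (fun v hv => hunit v hv.1) h
    interval_cases (Usq U).ncard <;> simp
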